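/- Let $p$ be a prime, let $g$ be an integer with $\gcd(g,p)=1$, and let $n$ be the multiplicative order of $g$ modulo $p$. If $n \equiv 3 \pmod 4$, then $Q(g,p)^2 \equiv -n \pmod p$, where $Q(g,p) = \sum_{k=1}^{n} g^{k^2} \pmod p$. -/

import Mathlib

/-!
Write `S(ζ, n) = ∑_{k<n} ζ^{k²}` for `ζ` of odd order `n` in a field of characteristic `≠ 2`.
Then `S(ζ, n)² = χ₄(n) n`, by strong induction on `n`. For coprime `a, b`, the Chinese
remainder theorem (`k ≡ b i + a j mod ab`) gives `S(ζ, ab) = S(ζ^{b²}, a) S(ζ^{a²}, b)`.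
For `n = m q²` with `q` odd, writing `k = u + m q v` and summing the geometric series in `v`
leaves only the `u` divisible by `q`, so `S(ζ, m q²) = q S(ζ^{q²}, m)`. For a prime `q` the
sum is the quadratic Gauss sum of `ZMod q`, whose square is `χ₄(q) q`. Finally, in `ZMod p`,
`n ≡ 3 mod 4` gives `χ₄(n) = -1`.
-/

/-- The quadratic Gauss-type sum `Q(g,p) = ∑_{k=1}^{n} g^{k²} (mod p)`, where `n` is the
multiplicative order of `g` modulo `p`. -/
def quadGaussSum (p : ℕ) (g : ℤ) (n : ℕ) : ZMod p :=
  ∑ k ∈ Finset.Icc 1 n, (g : ZMod p) ^ (k ^ 2)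

open Finset Function

theorem Function.Periodic.sum_comp_eq_sum_range {M ι : Type*} [AddCommMonoid M] {f : ℕ → M}
    {N : ℕ} (hf : Periodic f N) {s : Finset ι} (φ : ι → ℕ)
    (hφ : Set.InjOn (fun i ↦ φ i % N) s) (hs : #s = N) :
    ∑ i ∈ s, f (φ i) = ∑ k ∈ range N, f k := by
  rcases N.eq_zero_or_pos with rfl | hN
  · simp_all
  have hmaps : Set.MapsTo (fun i ↦ φ i % N) s (range N) :=
    fun i _ ↦ mem_range.2 (Nat.mod_lt _ hN)
  exact sum_nbij _ hmaps hφ (surjOn_of_injOn_of_card_le _ hmaps hφ (by simp [hs]))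
    fun i _ ↦ (hf.map_mod_nat _).symm

theorem Finset.sum_range_mul_eq_sum_sum {M : Type*} [AddCommMonoid M] (f : ℕ → M) (a b : ℕ) :
    ∑ k ∈ range (a * b), f k = ∑ u ∈ range a, ∑ v ∈ range b, f (u + a * v) := by
  induction b with
  | zero => simp
  | succ b ih =>
    rw [mul_add_one, sum_range_add, ih]
    simp only [sum_range_succ, sum_add_distrib, add_comm (a * b)]

theorem Finset.sum_range_mul_ite_dvd {M : Type*} [AddCommMonoid M] (g : ℕ → M) {q : ℕ}
    (hq : 0 < q) (m : ℕ) :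
    ∑ u ∈ range (q * m), (if q ∣ u then g u else 0) = ∑ w ∈ range m, g (q * w) := by
  rw [sum_range_mul_eq_sum_sum, sum_eq_single_of_mem 0 (mem_range.2 hq)]
  · simp
  · intro r hr hr0
    refine sum_eq_zero fun w _ ↦ if_neg fun hdvd ↦ hr0 ?_
    exact Nat.eq_zero_of_dvd_of_lt ((Nat.dvd_add_left (dvd_mul_right q w)).1 hdvd) (mem_range.1 hr)

theorem Nat.eq_of_mul_add_mul_modEq {a b i i' j j' : ℕ} (hab : a.Coprime b) (hi : i < a)
    (hi' : i' < a) (h : b * i + a * j ≡ b * i' + a * j' [MOD a * b]) : i = i' := by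
  have h' : b * i ≡ b * i' [MOD a] := by
    simpa [Nat.ModEq, Nat.add_mul_mod_self_left] using h.of_mul_right b
  exact (h'.cancel_left_of_coprime hab).eq_of_lt_of_lt hi hi'

theorem sum_range_pow_mul_eq_ite {R : Type*} [CommRing R] [IsDomain R] {ω : R} {q : ℕ}
    (hω : orderOf ω = q) (u : ℕ) :
    ∑ v ∈ range q, ω ^ (u * v) = if q ∣ u then (q : R) else 0 := by
  simp_rw [pow_mul]
  split_ifs with hu
  · rw [← hω, orderOf_dvd_iff_pow_eq_one] at hu
    simp [hu]
  · have hne : ω ^ u - 1 ≠ 0 := by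
      rwa [sub_ne_zero, Ne, ← orderOf_dvd_iff_pow_eq_one, hω]
    have hroot : (ω ^ u) ^ q = 1 := by
      rw [← pow_mul, mul_comm, pow_mul, ← hω, pow_orderOf_eq_one, one_pow]
    simpa [hroot, hne] using geom_sum_mul (ω ^ u) q

theorem orderOf_pow_sq_of_coprime {G : Type*} [Monoid G] {x : G} {a b : ℕ} (hab : a.Coprime b)
    (hx : orderOf x = a * b) : orderOf (x ^ (b ^ 2)) = a := by
  rcases b.eq_zero_or_pos with rfl | hb
  · simp [(Nat.coprime_zero_right a).1 hab]
  have hxb : orderOf (x ^ b) = a := by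
    rw [orderOf_pow_of_dvd hb.ne' (hx ▸ dvd_mul_left b a), hx, Nat.mul_div_cancel _ hb]
  rw [sq, pow_mul, Nat.Coprime.orderOf_pow (hxb ▸ hab), hxb]

theorem periodic_pow_sq {M : Type*} [Monoid M] {ζ : M} {n : ℕ} (hζ : ζ ^ n = 1) :
    Periodic (fun k : ℕ ↦ ζ ^ (k ^ 2)) n := by
  intro k
  dsimp only
  rw [show (k + n) ^ 2 = k ^ 2 + n * (2 * k + n) by ring, pow_add, pow_mul, hζ, one_pow, mul_one]

section

variable {R : Type*}

def quadPowSum [Semiring R] (ζ : R) (n : ℕ) : R :=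
  ∑ k ∈ range n, ζ ^ (k ^ 2)

theorem sum_Icc_pow_sq_eq_quadPowSum [Semiring R] {ζ : R} {n : ℕ}
    (hζ : ζ ^ n = 1) : ∑ k ∈ Icc 1 n, ζ ^ (k ^ 2) = quadPowSum ζ n := by
  rcases n.eq_zero_or_pos with rfl | hn
  · simp [quadPowSum]
  rw [quadPowSum, range_eq_Ico, sum_eq_sum_Ico_succ_bot hn, ← Ico_add_one_right_eq_Icc,
    sum_Ico_succ_top hn, add_comm, sq n, pow_mul, hζ, one_pow, zero_pow two_ne_zero, pow_zero]

theorem quadPowSum_mul_of_coprime [CommSemiring R] {ζ : R} {a b : ℕ} (hab : a.Coprime b)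
    (hζ : ζ ^ (a * b) = 1) :
    quadPowSum ζ (a * b) = quadPowSum (ζ ^ (b ^ 2)) a * quadPowSum (ζ ^ (a ^ 2)) b := by
  have hinj : Set.InjOn (fun ij : ℕ × ℕ ↦ (b * ij.1 + a * ij.2) % (a * b))
      ↑(range a ×ˢ range b) := by
    rintro ⟨i, j⟩ hij ⟨i', j'⟩ hij' (h : b * i + a * j ≡ b * i' + a * j' [MOD a * b])
    simp only [coe_product, Set.mem_prod, mem_coe, mem_range] at hij hij'
    refine Prod.ext (Nat.eq_of_mul_add_mul_modEq hab hij.1 hij'.1 h)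
      (Nat.eq_of_mul_add_mul_modEq (j := i) (j' := i') hab.symm hij.2 hij'.2 ?_)
    rw [add_comm, add_comm (a * j'), mul_comm b a]
    exact h
  rw [quadPowSum, ← (periodic_pow_sq hζ).sum_comp_eq_sum_range _ hinj (by simp), quadPowSum,
    quadPowSum, sum_mul_sum, ← sum_product']
  refine sum_congr rfl fun ⟨i, j⟩ _ ↦ ?_
  rw [← pow_mul, ← pow_mul, ← pow_add,
    show (b * i + a * j) ^ 2 = b ^ 2 * i ^ 2 + a ^ 2 * j ^ 2 + a * b * (2 * i * j) by ring,
    pow_add, pow_mul ζ (a * b), hζ, one_pow, mul_one]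

theorem quadPowSum_mul_sq [CommRing R] [IsDomain R] {ζ : R} {m q : ℕ} (hq : Odd q)
    (hζ : orderOf ζ = m * q ^ 2) :
    quadPowSum ζ (m * q ^ 2) = q * quadPowSum (ζ ^ (q ^ 2)) m := by
  rcases m.eq_zero_or_pos with rfl | hm
  · simp [quadPowSum]
  have hn : m * q ^ 2 = q * m * q := by ring
  have hω : orderOf (ζ ^ (2 * (q * m))) = q := by
    have hqm : orderOf (ζ ^ (q * m)) = q := by
      rw [orderOf_pow_of_dvd (Nat.mul_pos hq.pos hm).ne' ⟨q, hζ.trans hn⟩, hζ, hn,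
        Nat.mul_div_cancel_left q (Nat.mul_pos hq.pos hm)]
    rw [pow_mul', Nat.Coprime.orderOf_pow (by rw [hqm]; exact hq.coprime_two_right), hqm]
  have hterm (u v : ℕ) :
      ζ ^ ((u + q * m * v) ^ 2) = ζ ^ (u ^ 2) * (ζ ^ (2 * (q * m))) ^ (u * v) := by
    have hsq :
        (u + q * m * v) ^ 2 = u ^ 2 + 2 * (q * m) * (u * v) + m * q ^ 2 * (m * v ^ 2) := by
      ring
    rw [hsq, pow_add, pow_mul ζ (m * q ^ 2), ← hζ, pow_orderOf_eq_one, one_pow, mul_one, pow_add,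
      pow_mul]
  calc quadPowSum ζ (m * q ^ 2)
      = ∑ u ∈ range (q * m), ∑ v ∈ range q, ζ ^ ((u + q * m * v) ^ 2) := by
        rw [quadPowSum, hn, sum_range_mul_eq_sum_sum]
    _ = ∑ u ∈ range (q * m), if q ∣ u then (q : R) * ζ ^ (u ^ 2) else 0 := by
        refine sum_congr rfl fun u _ ↦ ?_
        simp_rw [hterm, ← mul_sum, sum_range_pow_mul_eq_ite hω, mul_ite, mul_zero, mul_comm]
    _ = ∑ w ∈ range m, (q : R) * ζ ^ ((q * w) ^ 2) := sum_range_mul_ite_dvd _ hq.pos m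
    _ = q * quadPowSum (ζ ^ (q ^ 2)) m := by
        simp_rw [quadPowSum, mul_sum, ← pow_mul, mul_pow]

end

theorem sum_addChar_sq_eq_gaussSum {F R : Type*} [Field F] [Fintype F] [DecidableEq F]
    [CommRing R] [IsDomain R] (hF : ringChar F ≠ 2) {ψ : AddChar F R} (hψ : ψ ≠ 1) :
    ∑ x, ψ (x ^ 2) = gaussSum ((quadraticChar F).ringHomComp (Int.castRingHom R)) ψ := by
  have hfiber (t : F) :
      ∑ x with x ^ 2 = t, ψ (x ^ 2) = ((quadraticChar F t + 1 : ℤ) : R) * ψ t := by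
    rw [sum_congr rfl fun x hx ↦ by rw [(mem_filter.1 hx).2], sum_const, nsmul_eq_mul,
      ← quadraticChar_card_sqrts hF t, Set.toFinset_ofPred]
    norm_cast
  rw [← sum_fiberwise univ (· ^ 2)]
  simp_rw [hfiber, Int.cast_add, Int.cast_one, add_mul, one_mul, sum_add_distrib,
    AddChar.sum_eq_zero_of_ne_one hψ, add_zero]
  rfl

open ZMod in
theorem quadPowSum_sq_of_prime {F : Type*} [Field F] (hF : ringChar F ≠ 2) {q : ℕ}
    [Fact q.Prime] (hq2 : q ≠ 2) {ζ : F} (hζ : orderOf ζ = q) :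
    quadPowSum ζ q ^ 2 = χ₄ q * q := by
  have hζq : ζ ^ q = 1 := hζ ▸ pow_orderOf_eq_one ζ
  have hψ := AddChar.zmodChar_primitive_of_primitive_root q (hζ ▸ IsPrimitiveRoot.orderOf ζ)
  have hqchar : ringChar (ZMod q) ≠ 2 := by rwa [ZMod.ringChar_zmod_n]
  set χ := (quadraticChar (ZMod q)).ringHomComp (Int.castRingHom F)
  have hχ : χ ≠ 1 := by
    obtain ⟨a, ha⟩ := quadraticChar_exists_neg_one' hqchar
    intro h
    have h1 : χ a = 1 := h ▸ MulChar.one_apply a.isUnit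
    rw [MulChar.ringHomComp_apply, ha] at h1
    exact Ring.neg_one_ne_one_of_char_ne_two hF (by simpa using h1)
  have hsum : quadPowSum ζ q = ∑ x : ZMod q, AddChar.zmodChar q hζq (x ^ 2) := by
    rw [quadPowSum, ← (periodic_pow_sq hζq).sum_comp_eq_sum_range ZMod.val ?_ (ZMod.card q)]
    · refine sum_congr rfl fun x _ ↦ ?_
      rw [show x ^ 2 = ((x.val ^ 2 : ℕ) : ZMod q) by simp, AddChar.zmodChar_apply']
    · intro x _ y _ h
      exact ZMod.val_injective q (by simpa [Nat.mod_eq_of_lt (ZMod.val_lt _)] using h)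
  rw [hsum, sum_addChar_sq_eq_gaussSum hqchar (by simpa using hψ one_ne_zero),
    gaussSum_sq hχ ((quadraticChar_isQuadratic _).comp _) hψ, MulChar.ringHomComp_apply,
    quadraticChar_neg_one hqchar, ZMod.card]
  simp

open ZMod in
theorem quadPowSum_sq {F : Type*} [Field F] (hF : ringChar F ≠ 2) {n : ℕ} (hn : Odd n) {ζ : F}
    (hζ : orderOf ζ = n) : quadPowSum ζ n ^ 2 = χ₄ n * n := by
  induction n using Nat.strong_induction_on generalizing ζ with
  | _ n ih =>
  rcases eq_or_ne n 1 with rfl | hn1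
  · simp [quadPowSum]
  obtain ⟨q, hq, m, rfl⟩ := Nat.exists_prime_and_dvd hn1
  have := Fact.mk hq
  have hqodd : Odd q := Nat.Odd.of_mul_left hn
  have hmodd : Odd m := Nat.Odd.of_mul_right hn
  by_cases hqm : q ∣ m
  · obtain ⟨r, rfl⟩ := hqm
    rw [show q * (q * r) = r * q ^ 2 by ring] at hζ ih ⊢
    have hr : r < r * q ^ 2 :=
      lt_mul_right (Nat.Odd.of_mul_right hmodd).pos (Nat.one_lt_pow two_ne_zero hq.one_lt)
    have hζr : orderOf (ζ ^ q ^ 2) = r := by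
      rw [orderOf_pow_of_dvd (pow_pos hq.pos 2).ne' (hζ ▸ dvd_mul_left _ _), hζ,
        Nat.mul_div_cancel _ (pow_pos hq.pos 2)]
    have hχq : χ₄ (q ^ 2 : ℕ) = 1 :=
      χ₄_nat_one_mod_four (by rcases hqodd with ⟨k, rfl⟩; ring_nf; omega)
    rw [quadPowSum_mul_sq hqodd hζ, mul_pow, ih r hr (Nat.Odd.of_mul_right hmodd) hζr,
      Nat.cast_mul, map_mul, hχq]
    push_cast
    ring
  · have hcop : q.Coprime m := (Nat.Prime.coprime_iff_not_dvd hq).2 hqm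
    have hq2 : q ≠ 2 := by
      rintro rfl
      exact Nat.not_odd_iff_even.2 even_two hqodd
    rw [quadPowSum_mul_of_coprime hcop (hζ ▸ pow_orderOf_eq_one ζ), mul_pow,
      quadPowSum_sq_of_prime hF hq2 (orderOf_pow_sq_of_coprime hcop hζ),
      ih m (lt_mul_left hmodd.pos hq.one_lt) hmodd
        (orderOf_pow_sq_of_coprime hcop.symm (mul_comm q m ▸ hζ)),
      Nat.cast_mul, map_mul]
    push_cast
    ring

theorem quadGaussSum_sq_of_order_three_mod_four_general (p : ℕ) (hp : p.Prime)
    (g : ℤ)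
    (n : ℕ) (hn : n = orderOf ((g : ZMod p))) (hn4 : n % 4 = 3) :
    (quadGaussSum p g n) ^ 2 = -(n : ZMod p) := by
  have := Fact.mk hp
  have hg : (g : ZMod p) ≠ 0 := by
    intro h
    rw [h, orderOf_zero] at hn
    omega
  have hp2 : ringChar (ZMod p) ≠ 2 := by
    rw [ZMod.ringChar_zmod_n]
    rintro rfl
    have := Nat.le_of_dvd one_pos (hn ▸ ZMod.orderOf_dvd_card_sub_one hg)
    omega
  rw [quadGaussSum, sum_Icc_pow_sq_eq_quadPowSum (hn ▸ pow_orderOf_eq_one _),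
    quadPowSum_sq hp2 (Nat.odd_iff.2 (by omega)) hn.symm, ZMod.χ₄_nat_three_mod_four hn4]
  simp

/-- If `n`, the multiplicative order of `g` mod `p`, satisfies `n ≡ 3 (mod 4)`,
then `Q(g,p)² ≡ -n (mod p)`. -/
theorem quadGaussSum_sq_of_order_three_mod_four (p : ℕ) (hp : p.Prime)
    (g : ℤ) (hg : Int.gcd g p = 1)
    (n : ℕ) (hn : n = orderOf ((g : ZMod p))) (hn4 : n % 4 = 3) :
    (quadGaussSum p g n) ^ 2 = -(n : ZMod p) :=
  quadGaussSum_sq_of_order_three_mod_four_general p hp g n hn hn4
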